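/- arXiv:1806.08944 — 2 statements merged into one kernel-verified Lean document; each statement's English description precedes it below -/
import Mathlib

section
/- For a prime p ≥ 5, the energy of the line graph of the zero-divisor graph of Z_{p^2} equals 2p^2 - 10p + 8. -/
open Polynomial SimpleGraph

/-- The zero-divisor graph of `ZMod n`: vertices are the nonzero zero-divisors,
adjacency is `x * y = 0` (for distinct vertices). -/
def zdGraph (n : ℕ) :
    SimpleGraph {x : ZMod n // x ≠ 0 ∧ ∃ y : ZMod n, y ≠ 0 ∧ x * y = 0} where
  Adj a b := a ≠ b ∧ (a : ZMod n) * b = 0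
  symm := ⟨fun a b h => ⟨h.1.symm, by rw [mul_comm]; exact h.2⟩⟩
  loopless := ⟨fun a h => h.1 rfl⟩

/-- The energy of a graph: the sum of the absolute values of the eigenvalues
(roots of the characteristic polynomial, with multiplicity) of its adjacency matrix. -/
noncomputable def energy {V : Type*} [Fintype V] [DecidableEq V] (G : SimpleGraph V)
    [DecidableRel G.Adj] : ℝ :=
  (((G.adjMatrix ℝ).charpoly).roots.map (fun x => |x|)).sum

/-- The Wiener index of a graph: half the sum of distances over all ordered pairs. -/
noncomputable def wienerIndex {V : Type*} (G : SimpleGraph V) : ℕ :=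
  (∑ᶠ p : V × V, G.dist p.1 p.2) / 2


/-!
In `ZMod (p ^ 2)` the non-units are the multiples of `p`, so any two of them multiply to zero
and the zero-divisor graph is the complete graph on its `p - 1` vertices.

For `K_n` with vertex–edge incidence matrix `B` one has `Bᵀ B = A(L(K_n)) + 2` and
`B Bᵀ = J + (n - 2)`, where `J` is the all-ones matrix. The spectrum of `B Bᵀ` is
`{2n - 2, (n - 2)^(n - 1)}`, and `Bᵀ B` has the same nonzero spectrum padded with zeros, so the
eigenvalues of `L(K_n)` are `2n - 4`, `n - 4` (`n - 1` times) and `-2` (`n(n - 1)/2 - n` times).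
For `n ≥ 4` the absolute values add up to `2n² - 6n`, which is `2p² - 10p + 8` at `n = p - 1`.
-/

open Finset Matrix

theorem exists_ne_zero_mul_eq_zero_iff_not_isUnit {R : Type*} [CommRing R] [Finite R] {x : R} :
    (∃ y, y ≠ 0 ∧ x * y = 0) ↔ ¬IsUnit x := by
  rw [isUnit_iff_mem_nonZeroDivisors_of_finite, mem_nonZeroDivisors_iff_left]
  push Not
  simp only [and_comm]

theorem card_nonzero_zeroDivisors {R : Type*} [CommRing R] [Nontrivial R] [Fintype R]
    [DecidableEq R] [Fintype Rˣ] :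
    Fintype.card {x : R // x ≠ 0 ∧ ∃ y, y ≠ 0 ∧ x * y = 0}
      = Fintype.card R - Fintype.card Rˣ - 1 := by
  classical
  have hunits : #{x : R | IsUnit x} = Fintype.card Rˣ := by
    rw [← Fintype.card_subtype, Fintype.card_eq_nat_card, Fintype.card_eq_nat_card]
    exact (Nat.card_congr (Equiv.ofInjective _ Units.val_injective)).symm
  have hnonunits : #{x : R | x ≠ 0 ∧ ∃ y, y ≠ 0 ∧ x * y = 0}
      = #(({x : R | ¬IsUnit x} : Finset R).erase 0) := by
    congr 1
    ext x
    simp only [mem_filter, mem_erase, mem_univ, true_and]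
    rw [exists_ne_zero_mul_eq_zero_iff_not_isUnit, and_comm]
  rw [Fintype.card_subtype, hnonunits, card_erase_of_mem (by simp), filter_not, card_sdiff,
    inter_eq_left.mpr (filter_subset _ _), hunits, card_univ]

namespace ZMod

theorem prime_dvd_val_of_not_isUnit {p k : ℕ} (hp : p.Prime) [NeZero (p ^ k)]
    {x : ZMod (p ^ k)} (hx : ¬IsUnit x) : p ∣ x.val := by
  contrapose! hx
  rw [← natCast_zmod_val x, isUnit_iff_coprime]
  exact ((hp.coprime_iff_not_dvd.mpr hx).pow_left k).symm

theorem mul_eq_zero_of_not_isUnit {p : ℕ} (hp : p.Prime) [NeZero (p ^ 2)] {x y : ZMod (p ^ 2)}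
    (hx : ¬IsUnit x) (hy : ¬IsUnit y) : x * y = 0 := by
  rw [← natCast_zmod_val x, ← natCast_zmod_val y, ← Nat.cast_mul, natCast_eq_zero_iff]
  simpa [← sq] using
    mul_dvd_mul (prime_dvd_val_of_not_isUnit hp hx) (prime_dvd_val_of_not_isUnit hp hy)

theorem card_nonzero_zeroDivisors_prime_sq {p : ℕ} (hp : p.Prime) [NeZero (p ^ 2)] :
    Fintype.card {x : ZMod (p ^ 2) // x ≠ 0 ∧ ∃ y, y ≠ 0 ∧ x * y = 0} = p - 1 := by
  have : Fact (1 < p ^ 2) := ⟨Nat.one_lt_pow two_ne_zero hp.one_lt⟩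
  have : Fact p.Prime := ⟨hp⟩
  rw [card_nonzero_zeroDivisors, ZMod.card, card_units_eq_totient,
    Nat.totient_prime_pow hp two_pos]
  have hsq : p ^ 2 = p ^ (2 - 1) * (p - 1) + p := by
    rw [pow_one, ← Nat.mul_add_one, Nat.sub_add_cancel hp.one_le, sq]
  omega

end ZMod

theorem zdGraph_prime_sq_eq_top {p : ℕ} (hp : p.Prime) [NeZero (p ^ 2)] :
    zdGraph (p ^ 2) = ⊤ := by
  ext a b
  refine ⟨And.left, fun hab => ⟨hab, ZMod.mul_eq_zero_of_not_isUnit hp ?_ ?_⟩⟩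
  · exact exists_ne_zero_mul_eq_zero_iff_not_isUnit.mp a.2.2
  · exact exists_ne_zero_mul_eq_zero_iff_not_isUnit.mp b.2.2

theorem Sym2.eq_of_mem_of_mem_of_ne {α : Type*} {e f : Sym2 α} (hef : e ≠ f) {v w : α}
    (hv : v ∈ e ∧ v ∈ f) (hw : w ∈ e ∧ w ∈ f) : w = v := by
  by_contra hwv
  exact hef (((Sym2.mem_and_mem_iff hwv).mp ⟨hw.1, hv.1⟩).trans
    ((Sym2.mem_and_mem_iff hwv).mp ⟨hw.2, hv.2⟩).symm)

namespace SimpleGraph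

variable {V : Type*} [DecidableEq V] (G : SimpleGraph V) [DecidableRel G.Adj]
  (R : Type*) [Semiring R]

def edgeIncMatrix : Matrix V G.edgeSet R := (G.incMatrix R).submatrix id (↑)

variable {G R} in
theorem edgeIncMatrix_apply (v : V) (e : G.edgeSet) :
    G.edgeIncMatrix R v e = if v ∈ (e : Sym2 V) then 1 else 0 := by
  simp [edgeIncMatrix, incMatrix_apply', incidenceSet, e.2]

variable [Fintype V]

theorem edgeIncMatrix_mul_transpose [Fintype G.edgeSet] :
    G.edgeIncMatrix R * (G.edgeIncMatrix R)ᵀ = G.incMatrix R * (G.incMatrix R)ᵀ := by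
  ext a b
  simp only [edgeIncMatrix, mul_apply, submatrix_apply, transpose_apply, id]
  refine (sum_subtype G.edgeFinset (fun _ => mem_edgeFinset)
    (fun e => G.incMatrix R a e * G.incMatrix R b e)).symm.trans
    (sum_subset (subset_univ _) fun e _ he => ?_)
  rw [incMatrix_of_notMem_incidenceSet G fun h => he (mem_edgeFinset.mpr h.1), zero_mul]

theorem edgeIncMatrix_transpose_mul [DecidableRel G.lineGraph.Adj] :
    (G.edgeIncMatrix R)ᵀ * G.edgeIncMatrix R = G.lineGraph.adjMatrix R + 2 := by
  ext e f
  simp only [mul_apply, transpose_apply, edgeIncMatrix_apply, ite_zero_mul_ite_zero, one_mul,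
    Matrix.add_apply, adjMatrix_apply, Matrix.ofNat_apply, lineGraph_adj_iff_exists]
  obtain rfl | hef := eq_or_ne e f
  · simpa [incMatrix_apply', incidenceSet, e.2] using
      G.sum_incMatrix_apply_of_mem_edgeSet (R := R) e.2
  · simp only [hef, ne_eq, not_false_eq_true, true_and, if_false, Nat.cast_zero, add_zero]
    split_ifs with hcommon
    · obtain ⟨v, hv⟩ := hcommon
      have hunique : ∀ w, w ≠ v → ¬(w ∈ (e : Sym2 V) ∧ w ∈ (f : Sym2 V)) := fun w hwv hw =>
        hwv (Sym2.eq_of_mem_of_mem_of_ne (Subtype.coe_ne_coe.mpr hef) hv hw)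
      rw [sum_eq_single_of_mem v (mem_univ v) fun w _ hwv => if_neg (hunique w hwv), if_pos hv]
    · exact sum_eq_zero fun w _ => if_neg fun hw => hcommon ⟨w, hw⟩

section Complete

variable (V) (R : Type*) [CommRing R] [Fintype (⊤ : SimpleGraph V).edgeSet]

theorem card_edgeSet_top :
    Fintype.card (⊤ : SimpleGraph V).edgeSet = (Fintype.card V).choose 2 := by
  rw [← edgeFinset_card]
  convert card_edgeFinset_top_eq_card_choose_two (V := V)

theorem card_le_card_edgeSet_top (hV : 3 ≤ Fintype.card V) :
    Fintype.card V ≤ Fintype.card (⊤ : SimpleGraph V).edgeSet := by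
  rw [card_edgeSet_top, Nat.choose_two_right, Nat.le_div_iff_mul_le two_pos]
  exact Nat.mul_le_mul_left _ (by omega)

theorem edgeIncMatrix_top_mul_transpose :
    (⊤ : SimpleGraph V).edgeIncMatrix R * ((⊤ : SimpleGraph V).edgeIncMatrix R)ᵀ
      = vecMulVec 1 1 + scalar V ((Fintype.card V : R) - 2) := by
  rw [edgeIncMatrix_mul_transpose, incMatrix_mul_transpose]
  ext a b
  obtain rfl | hab := eq_or_ne a b
  · have : Nonempty V := ⟨a⟩
    simp only [of_apply, if_pos, complete_graph_degree, Nat.cast_pred Fintype.card_pos,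
      Matrix.add_apply, vecMulVec_one, replicateCol_apply, Pi.one_apply, scalar_apply,
      diagonal_apply_eq]
    ring
  · simp [hab]

theorem charpoly_edgeIncMatrix_top_mul_transpose [Nonempty V] :
    ((⊤ : SimpleGraph V).edgeIncMatrix R * ((⊤ : SimpleGraph V).edgeIncMatrix R)ᵀ).charpoly
      = (X - C ((Fintype.card V : R) - 2)) ^ (Fintype.card V - 1)
        * (X - C (2 * (Fintype.card V : R) - 2)) := by
  rw [edgeIncMatrix_top_mul_transpose, ← sub_neg_eq_add, ← map_neg, charpoly_sub_scalar,
    charpoly_vecMulVec, one_dotProduct_one]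
  obtain ⟨k, hk⟩ := Nat.exists_eq_add_one_of_ne_zero (Fintype.card_ne_zero (α := V))
  simp only [hk, Nat.cast_add_one, add_tsub_cancel_right, pow_succ, smul_eq_C_mul, map_add,
    map_sub, map_neg, map_mul, map_one, map_natCast, map_ofNat, sub_comp, mul_comp, pow_comp,
    X_comp, add_comp, natCast_comp, one_comp]
  ring

theorem charpoly_adjMatrix_lineGraph_top [DecidableEq (⊤ : SimpleGraph V).edgeSet]
    [DecidableRel (⊤ : SimpleGraph V).lineGraph.Adj] (hV : 3 ≤ Fintype.card V) :
    ((⊤ : SimpleGraph V).lineGraph.adjMatrix R).charpoly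
      = (X + 2) ^ (Fintype.card (⊤ : SimpleGraph V).edgeSet - Fintype.card V)
        * (X - C ((Fintype.card V : R) - 4)) ^ (Fintype.card V - 1)
        * (X - C (2 * (Fintype.card V : R) - 4)) := by
  have : Nonempty V := Fintype.card_pos_iff.mp (by omega)
  have hA : (⊤ : SimpleGraph V).lineGraph.adjMatrix R
      = ((⊤ : SimpleGraph V).edgeIncMatrix R)ᵀ * (⊤ : SimpleGraph V).edgeIncMatrix R
        - scalar _ 2 := by
    rw [edgeIncMatrix_transpose_mul]
    ext e f
    simp [Matrix.ofNat_apply, diagonal_apply]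
  rw [hA, charpoly_sub_scalar, charpoly_mul_comm_of_le _ _ (card_le_card_edgeSet_top V hV),
    charpoly_edgeIncMatrix_top_mul_transpose]
  simp only [map_sub, map_mul, map_natCast, map_ofNat, mul_comp, pow_comp, X_comp, sub_comp,
    natCast_comp, ofNat_comp]
  ring

end Complete

theorem energy_lineGraph_top [Fintype (⊤ : SimpleGraph V).edgeSet]
    [DecidableEq (⊤ : SimpleGraph V).edgeSet] [DecidableRel (⊤ : SimpleGraph V).lineGraph.Adj]
    (hV : 4 ≤ Fintype.card V) :
    energy (⊤ : SimpleGraph V).lineGraph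
      = 2 * (Fintype.card V : ℝ) ^ 2 - 6 * Fintype.card V := by
  set n := Fintype.card V
  set m := Fintype.card (⊤ : SimpleGraph V).edgeSet
  have hnm : n ≤ m := card_le_card_edgeSet_top V (by omega)
  have hm : (m : ℝ) = n * (n - 1) / 2 := by
    rw [show m = n.choose 2 from card_edgeSet_top V, Nat.cast_choose_two]
  have hchar : ((⊤ : SimpleGraph V).lineGraph.adjMatrix ℝ).charpoly
      = ((Multiset.replicate (m - n) (-2) + Multiset.replicate (n - 1) ((n : ℝ) - 4)
          + {2 * (n : ℝ) - 4}).map fun a => X - C a).prod := by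
    rw [charpoly_adjMatrix_lineGraph_top V ℝ (by omega)]
    simp only [Multiset.map_add, Multiset.prod_add, Multiset.map_replicate,
      Multiset.prod_replicate, Multiset.map_singleton, Multiset.prod_singleton, map_neg,
      map_ofNat, sub_neg_eq_add]
    rfl
  have h4 : (4 : ℝ) ≤ n := by exact_mod_cast hV
  rw [energy, hchar, roots_multiset_prod_X_sub_C]
  simp only [Multiset.map_add, Multiset.sum_add, Multiset.map_replicate, Multiset.sum_replicate,
    Multiset.map_singleton, Multiset.sum_singleton, nsmul_eq_mul, abs_neg, abs_two,
    abs_of_nonneg (by linarith : (0 : ℝ) ≤ n - 4),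
    abs_of_nonneg (by linarith : (0 : ℝ) ≤ 2 * n - 4),
    Nat.cast_sub hnm, Nat.cast_sub (by omega : 1 ≤ n), hm, Nat.cast_one]
  ring

end SimpleGraph

open scoped Classical in
theorem energy_lineGraph_zdGraph_prime_sq
    (p : ℕ) (hp : p.Prime) (hp5 : 5 ≤ p) [NeZero (p ^ 2)] :
    energy (zdGraph (p ^ 2)).lineGraph = 2 * (p : ℝ) ^ 2 - 10 * p + 8 := by
  have hcard := ZMod.card_nonzero_zeroDivisors_prime_sq hp
  rw [zdGraph_prime_sq_eq_top hp]
  -- `convert` identifies the classical instances of the goal with the canonical ones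
  convert SimpleGraph.energy_lineGraph_top (hcard ▸ (by omega : 4 ≤ p - 1)) using 2
  rw [hcard, Nat.cast_sub (by omega)]
  push_cast
  ring
end

section
/- For distinct primes p, q with 2 < p < q, the Wiener index of the line graph of the zero-divisor graph of Z_{pq} equals (1/2)(p-1)(q-1)(2pq - 3p - 3q + 4). -/
open Polynomial SimpleGraph

/-
By the Chinese remainder theorem `ZMod (p * q) ≃+* ZMod p × ZMod q`, a product of two fields, so
the nonzero zero-divisors are the points `(u, 0)` and `(0, v)` with `u, v ≠ 0`, and two of them are
adjacent iff they lie on different axes: the zero-divisor graph is `K_{p-1,q-1}`. Sending its edge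
`{(u, 0), (0, v)}` to `(u, v)`, two edges meet iff they agree in one coordinate, so the line graph
is the rook's graph `K_{p-1} □ K_{q-1}`, which is `(p + q - 4)`-regular of diameter 2. In such a
graph the distances from a vertex are 1 to its neighbours and 2 to everything else, adding up to
`2 (N - 1) - (p + q - 4)` with `N = (p - 1)(q - 1)`.
-/

open Finset

namespace SimpleGraph

variable {V W : Type*} {G : SimpleGraph V} {G' : SimpleGraph W}

theorem Hom.edist_le (f : G →g G') (u v : V) : G'.edist (f u) (f v) ≤ G.edist u v := by
  by_cases h : G.Reachable u v
  · obtain ⟨w, hw⟩ := h.exists_walk_length_eq_edist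
    rw [← hw, ← Walk.length_map f w]
    exact SimpleGraph.edist_le _
  · rw [edist_eq_top_of_not_reachable h]
    exact le_top

theorem Iso.edist_eq (f : G ≃g G') (u v : V) : G'.edist (f u) (f v) = G.edist u v :=
  le_antisymm (f.toHom.edist_le u v) (by simpa using f.symm.toHom.edist_le (f u) (f v))

theorem Iso.dist_eq (f : G ≃g G') (u v : V) : G'.dist (f u) (f v) = G.dist u v := by
  rw [dist, dist, f.edist_eq]

theorem Iso.wienerIndex_eq (f : G ≃g G') : wienerIndex G = wienerIndex G' := by
  rw [wienerIndex, wienerIndex, ← finsum_comp_equiv (f.toEquiv.prodCongr f.toEquiv)]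
  simp [f.dist_eq]

theorem dist_eq_of_ediam_le_two [DecidableEq V] [DecidableRel G.Adj] (h : G.ediam ≤ 2)
    (u v : V) : G.dist u v = if u = v then 0 else if G.Adj u v then 1 else 2 := by
  split_ifs with huv hadj
  · rw [huv, dist_self]
  · exact dist_eq_one_iff_adj.mpr hadj
  · have hgt : 1 < G.edist u v := by
      rw [← not_le, edist_le_one_iff_adj_or_eq]
      tauto
    have h2 : G.edist u v = 2 :=
      le_antisymm (edist_le_ediam.trans h) (Order.add_one_le_of_lt hgt)
    rw [dist, h2]
    rfl

theorem sum_dist_eq_of_ediam_le_two [Fintype V] [G.LocallyFinite] (h : G.ediam ≤ 2)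
    (u : V) : ∑ v, G.dist u v = 2 * (Fintype.card V - 1) - G.degree u := by
  classical
  have hdeg : G.degree u = ∑ v, if G.Adj u v then 1 else 0 := by
    rw [← card_neighborFinset_eq_degree, ← card_filter]
    congr 1
    ext
    simp
  have hsum : ∑ v, (G.dist u v + if G.Adj u v then 1 else 0) = 2 * (Fintype.card V - 1) :=
    calc ∑ v, (G.dist u v + if G.Adj u v then 1 else 0)
        = ∑ v ∈ univ.erase u, 2 := by
          rw [← sum_erase_add _ _ (mem_univ u)]
          simp only [dist_self, SimpleGraph.irrefl, if_false, add_zero]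
          refine sum_congr rfl fun v hv => ?_
          rw [dist_eq_of_ediam_le_two h, if_neg (ne_of_mem_erase hv).symm]
          split_ifs <;> rfl
      _ = 2 * (Fintype.card V - 1) := by
          rw [sum_const, card_erase_of_mem (mem_univ u), card_univ, smul_eq_mul, mul_comm]
  rw [sum_add_distrib, ← hdeg] at hsum
  omega

theorem wienerIndex_eq_of_ediam_le_two [Fintype V] [G.LocallyFinite] {d : ℕ}
    (h : G.ediam ≤ 2) (hd : G.IsRegularOfDegree d) :
    wienerIndex G = Fintype.card V * (2 * (Fintype.card V - 1) - d) / 2 := by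
  rw [wienerIndex, finsum_eq_sum_of_fintype, Fintype.sum_prod_type]
  simp_rw [sum_dist_eq_of_ediam_le_two h, hd.degree_eq, sum_const, card_univ, smul_eq_mul]

theorem ediam_top_le_one : (⊤ : SimpleGraph V).ediam ≤ 1 :=
  ediam_le_of_edist_le fun u v => edist_le_one_iff_adj_or_eq.mpr (ne_or_eq u v)

theorem ediam_boxProd_le (G' : SimpleGraph W) : (G □ G').ediam ≤ G.ediam + G'.ediam :=
  ediam_le_of_edist_le fun x y => by
    rw [edist_boxProd]
    exact add_le_add edist_le_ediam edist_le_ediam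

theorem ediam_boxProd_top_le_two : ((⊤ : SimpleGraph V) □ (⊤ : SimpleGraph W)).ediam ≤ 2 :=
  (ediam_boxProd_le _).trans (add_le_add ediam_top_le_one ediam_top_le_one)

theorem IsRegularOfDegree.boxProd [G.LocallyFinite] [G'.LocallyFinite] [(G □ G').LocallyFinite]
    {k l : ℕ} (hG : G.IsRegularOfDegree k) (hG' : G'.IsRegularOfDegree l) :
    (G □ G').IsRegularOfDegree (k + l) := fun x => by
  rw [degree_boxProd, hG.degree_eq, hG'.degree_eq]

variable {α β : Type*}

def completeBipartiteGraphEdge (x : α × β) : (completeBipartiteGraph α β).edgeSet :=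
  ⟨s(.inl x.1, .inr x.2), by simp⟩

theorem completeBipartiteGraphEdge_bijective :
    Function.Bijective (completeBipartiteGraphEdge (α := α) (β := β)) := by
  constructor
  · intro x y h
    simpa [completeBipartiteGraphEdge, Prod.ext_iff] using h
  · rintro ⟨e, he⟩
    induction e using Sym2.ind with
    | _ v w =>
      rcases v with a | b <;> rcases w with a' | b' <;> simp at he
      · exact ⟨(a, b'), rfl⟩
      · exact ⟨(a', b), Subtype.ext Sym2.eq_swap⟩

noncomputable def lineGraphCompleteBipartiteGraphIso :
    (completeBipartiteGraph α β).lineGraph ≃g (⊤ : SimpleGraph α) □ (⊤ : SimpleGraph β) :=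
  RelIso.symm
  { toEquiv := Equiv.ofBijective _ completeBipartiteGraphEdge_bijective
    map_rel_iff' := by
      rintro ⟨a, b⟩ ⟨a', b'⟩
      simp [lineGraph_adj_iff_exists, completeBipartiteGraphEdge, boxProd_adj]
      tauto }

end SimpleGraph

theorem RingEquiv.ne_zero_and_exists_mul_eq_zero_iff {R S : Type*} [NonUnitalNonAssocSemiring R]
    [NonUnitalNonAssocSemiring S] (φ : R ≃+* S) (x : R) :
    (φ x ≠ 0 ∧ ∃ y, y ≠ 0 ∧ φ x * y = 0) ↔ (x ≠ 0 ∧ ∃ y, y ≠ 0 ∧ x * y = 0) := by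
  simp [φ.surjective.exists, ← map_mul]

section

variable {K L : Type*}

def axisPoint [Zero K] [Zero L] : {u : K // u ≠ 0} ⊕ {v : L // v ≠ 0} → K × L :=
  Sum.elim (fun u => (u, 0)) (fun v => (0, v))

theorem axisPoint_injective [Zero K] [Zero L] :
    Function.Injective (axisPoint (K := K) (L := L)) := by
  rintro (⟨u, hu⟩ | ⟨v, hv⟩) (⟨u', hu'⟩ | ⟨v', hv'⟩) h <;> simp_all [axisPoint]

theorem axisPoint_mul_eq_zero_iff [MulZeroClass K] [MulZeroClass L] [NoZeroDivisors K]
    [NoZeroDivisors L] (s t : {u : K // u ≠ 0} ⊕ {v : L // v ≠ 0}) :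
    axisPoint s * axisPoint t = 0 ↔ (completeBipartiteGraph _ _).Adj s t := by
  rcases s with ⟨u, hu⟩ | ⟨v, hv⟩ <;> rcases t with ⟨u', hu'⟩ | ⟨v', hv'⟩ <;> simp [axisPoint, *]

theorem ne_zero_and_exists_mul_eq_zero_iff_mem_range_axisPoint [MulZeroOneClass K]
    [MulZeroOneClass L] [NoZeroDivisors K] [NoZeroDivisors L] [Nontrivial K] [Nontrivial L]
    (z : K × L) :
    (z ≠ 0 ∧ ∃ w, w ≠ 0 ∧ z * w = 0) ↔ z ∈ Set.range axisPoint := by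
  constructor
  · rintro ⟨hz, w, hw, hzw⟩
    obtain ⟨a, b⟩ := z
    obtain ⟨c, d⟩ := w
    simp only [Prod.mk_mul_mk, Prod.mk_eq_zero, ne_eq, not_and_or] at hz hw hzw
    by_cases ha : a = 0
    · exact ⟨.inr ⟨b, hz.resolve_left (not_not.mpr ha)⟩, by simp [axisPoint, ha]⟩
    · have hb : b = 0 := by
        have hc : c = 0 := (mul_eq_zero.mp hzw.1).resolve_left ha
        have hd : d ≠ 0 := hw.resolve_left (not_not.mpr hc)
        exact (mul_eq_zero.mp hzw.2).resolve_right hd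
      exact ⟨.inl ⟨a, ha⟩, by simp [axisPoint, hb]⟩
  · rintro ⟨⟨u, hu⟩ | ⟨v, hv⟩, rfl⟩
    · exact ⟨by simp [axisPoint, hu], (0, 1), by simp, by simp [axisPoint]⟩
    · exact ⟨by simp [axisPoint, hv], (1, 0), by simp, by simp [axisPoint]⟩

variable {n : ℕ} [Semiring K] [Semiring L] [NoZeroDivisors K] [NoZeroDivisors L] [Nontrivial K]
  [Nontrivial L] (φ : ZMod n ≃+* K × L)

def zdGraphVertex (s : {u : K // u ≠ 0} ⊕ {v : L // v ≠ 0}) :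
    {x : ZMod n // x ≠ 0 ∧ ∃ y : ZMod n, y ≠ 0 ∧ x * y = 0} :=
  ⟨φ.symm (axisPoint s), (φ.ne_zero_and_exists_mul_eq_zero_iff _).mp <| by
    rw [φ.apply_symm_apply]
    exact (ne_zero_and_exists_mul_eq_zero_iff_mem_range_axisPoint _).mpr ⟨s, rfl⟩⟩

theorem zdGraphVertex_bijective : Function.Bijective (zdGraphVertex φ) := by
  refine ⟨fun s t h => axisPoint_injective (φ.symm.injective (congrArg Subtype.val h)), ?_⟩
  rintro ⟨x, hx⟩
  obtain ⟨s, hs⟩ := (ne_zero_and_exists_mul_eq_zero_iff_mem_range_axisPoint _).mp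
    ((φ.ne_zero_and_exists_mul_eq_zero_iff x).mpr hx)
  exact ⟨s, Subtype.ext (by simp [zdGraphVertex, hs])⟩

noncomputable def zdGraphIsoOfRingEquiv :
    zdGraph n ≃g completeBipartiteGraph {u : K // u ≠ 0} {v : L // v ≠ 0} :=
  RelIso.symm
  { toEquiv := Equiv.ofBijective _ (zdGraphVertex_bijective φ)
    map_rel_iff' := fun {s t} => by
      change _ ≠ _ ∧ φ.symm _ * φ.symm _ = 0 ↔ _
      rw [← map_mul, map_eq_zero_iff _ φ.symm.injective, axisPoint_mul_eq_zero_iff]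
      exact and_iff_right_of_imp fun hst h => hst.ne ((zdGraphVertex_bijective φ).1 h) }

end

theorem wiener_lineGraph_zdGraph_mul_primes
    (p q : ℕ) (hp : p.Prime) (hq : q.Prime) (h2p : 2 < p) (hpq : p < q) :
    wienerIndex (zdGraph (p * q)).lineGraph =
      (p - 1) * (q - 1) * (2 * p * q - 3 * p - 3 * q + 4) / 2 := by
  have : Fact p.Prime := ⟨hp⟩
  have : Fact q.Prime := ⟨hq⟩
  let φ := ZMod.chineseRemainder ((Nat.coprime_primes hp hq).mpr hpq.ne)
  rw [Iso.wienerIndex_eq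
      ((zdGraphIsoOfRingEquiv φ).lineGraph.trans lineGraphCompleteBipartiteGraphIso),
    wienerIndex_eq_of_ediam_le_two ediam_boxProd_top_le_two
      (IsRegularOfDegree.top.boxProd IsRegularOfDegree.top)]
  simp only [Fintype.card_prod, Fintype.card_subtype_compl, Fintype.card_unique, ZMod.card]
  congr 2
  -- for `p = 2` the truncated subtraction on the right would no longer match
  obtain ⟨a, rfl⟩ : ∃ a, p = a + 3 := ⟨p - 3, by omega⟩
  obtain ⟨b, rfl⟩ : ∃ b, q = b + 4 := ⟨q - 4, by omega⟩
  norm_num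
  ring_nf
  omega
end
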